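/- Fix integers n, m with n > N/2 and m > N/2 + 1, and suppose J ≥ 2n. Then for every ψ ∈ H^J(ℝ^N) with ⟨x⟩^m D^β ψ ∈ L^∞ for |β| ≤ 2n, and with v(t) = e^{itΔ}ψ, there is a constant C independent of ψ and t ≥ 0 such that Σ_{k=0}^{2n} sup_{|β|=k} ‖⟨x⟩^m D^β v‖_{L^∞((0,t)×ℝ^N)} ≤ C(1+t)^n Σ_{k=0}^{2n} sup_{|β|=k} ‖⟨x⟩^m D^β ψ‖_{L^∞} + C t (1+t)^n sup_{|β|=2n+2} ‖⟨x⟩^m D^β v‖_{L^∞((0,t)×ℝ^N)}. -/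

import Mathlib

open MeasureTheory Complex
open scoped BigOperators ENNReal NNReal SchwartzMap

noncomputable def jb {N : ℕ} (x : EuclideanSpace ℝ (Fin N)) : ℝ :=
  Real.sqrt (1 + ‖x‖ ^ 2)

noncomputable def Dk {N : ℕ} {F : Type*} [NormedAddCommGroup F] [NormedSpace ℝ F]
    (k : ℕ) (f : EuclideanSpace ℝ (Fin N) → F) (d : Fin k → Fin N)
    (x : EuclideanSpace ℝ (Fin N)) : F :=
  iteratedFDeriv ℝ k f x (fun i => EuclideanSpace.single (d i) 1)

noncomputable def lap {N : ℕ} {F : Type*} [NormedAddCommGroup F] [NormedSpace ℝ F]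
    (f : EuclideanSpace ℝ (Fin N) → F) (x : EuclideanSpace ℝ (Fin N)) : F :=
  ∑ i : Fin N, iteratedFDeriv ℝ 2 f x (fun _ => EuclideanSpace.single i 1)

noncomputable def gradNorm {N : ℕ} (f : EuclideanSpace ℝ (Fin N) → ℂ)
    (x : EuclideanSpace ℝ (Fin N)) : ℝ :=
  Real.sqrt (∑ i : Fin N, ‖fderiv ℝ f x (EuclideanSpace.single i 1)‖ ^ 2)

/-!
Write `A k` for the supremum over `[0, t] × ℝ^N` of `⟨x⟩^m |D^β v|`, `|β| = k`. Two estimates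
drive the proof. First, `D^β v(s) - D^β ψ = i ∫₀ˢ D^β Δv`, so `A k ≤ (data) + N 2^m t A (k + 2)`,
the weight changing by at most `2^m` on unit balls. The equation only gives the time derivative
pointwise in `x`, so this is proved for iterated difference quotients in `x`, which are finite
combinations of point values and converge to `D^β v`. Second, the one-dimensional interpolation
`|g'(0)| ≤ 2 sup |g| + sup |g''|` on `[0, 1]` gives `A (2n+1) ≤ 2^(m+1) (A (2n) + A (2n+2))`.
Iterating the first estimate downwards from `k = 2n` and `k = 2n + 1` costs `(1 + N 2^m t)^n`.
-/

open Filter Topology Set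
open scoped ContDiff fwdDiff

namespace Schrodinger

variable {N : ℕ}

local notation "E" => EuclideanSpace ℝ (Fin N)
local notation "𝐞" j:max => EuclideanSpace.single j (1 : ℝ)

theorem one_le_jb (x : E) : 1 ≤ jb x :=
  Real.one_le_sqrt.2 (le_add_of_nonneg_right (sq_nonneg _))

theorem jb_le_jb_add_dist (x ξ : E) : jb x ≤ jb ξ + dist x ξ := by
  have hξ : ‖ξ‖ ≤ jb ξ := Real.le_sqrt_of_sq_le (le_add_of_nonneg_left zero_le_one)
  have hsq : jb ξ ^ 2 = 1 + ‖ξ‖ ^ 2 := Real.sq_sqrt (by positivity)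
  have hx : ‖x‖ ≤ ‖ξ‖ + dist x ξ := by
    rw [dist_eq_norm]
    exact norm_le_insert' x ξ
  rw [jb, Real.sqrt_le_iff]
  refine ⟨by linarith [one_le_jb ξ, dist_nonneg (x := x) (y := ξ)], ?_⟩
  nlinarith [norm_nonneg x, norm_nonneg ξ, dist_nonneg (x := x) (y := ξ)]

theorem jb_pow_le_two_pow_mul {x ξ : E} (h : dist x ξ ≤ 1) (m : ℕ) :
    jb x ^ m ≤ 2 ^ m * jb ξ ^ m := by
  rw [← mul_pow]
  gcongr
  · exact zero_le_one.trans (one_le_jb x)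
  · linarith [jb_le_jb_add_dist x ξ, one_le_jb ξ]

theorem ofReal_jb_pow_mul_nnnorm {G : Type*} [SeminormedAddCommGroup G] (m : ℕ) (x : E) (z : G) :
    ENNReal.ofReal (jb x ^ m) * ‖z‖₊ = ENNReal.ofReal (jb x ^ m * ‖z‖) := by
  rw [ENNReal.ofReal_mul (pow_nonneg (zero_le_one.trans (one_le_jb x)) m), ofReal_norm,
    enorm_eq_nnnorm]

theorem norm_le_of_ofReal_jb_pow_mul_le {G : Type*} [SeminormedAddCommGroup G] {m : ℕ}
    {A : ℝ≥0∞} (hA : A ≠ ⊤) {x ξ : E} (hξ : dist ξ x ≤ 1) {z : G}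
    (hz : ENNReal.ofReal (jb ξ ^ m) * ‖z‖₊ ≤ A) :
    ‖z‖ ≤ 2 ^ m * A.toReal / jb x ^ m := by
  rw [ofReal_jb_pow_mul_nnnorm, ← ENNReal.ofReal_toReal hA,
    ENNReal.ofReal_le_ofReal_iff ENNReal.toReal_nonneg] at hz
  rw [le_div_iff₀ (pow_pos (zero_lt_one.trans_le (one_le_jb x)) m)]
  calc ‖z‖ * jb x ^ m ≤ ‖z‖ * (2 ^ m * jb ξ ^ m) :=
        mul_le_mul_of_nonneg_left (jb_pow_le_two_pow_mul (dist_comm x ξ ▸ hξ) m) (norm_nonneg z)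
    _ = 2 ^ m * (jb ξ ^ m * ‖z‖) := by ring
    _ ≤ 2 ^ m * A.toReal := by gcongr

variable {F : Type*} [NormedAddCommGroup F] [NormedSpace ℝ F]

theorem contDiff_Dk {f : E → F} (hf : ContDiff ℝ ∞ f) (k : ℕ) (d : Fin k → Fin N) :
    ContDiff ℝ ∞ (Dk k f d) :=
  (ContinuousMultilinearMap.apply ℝ (fun _ : Fin k => E) F _).contDiff.comp
    (hf.iteratedFDeriv_right (m := ∞) (mod_cast le_top))

theorem hasDerivAt_Dk_line {f : E → F} (hf : ContDiff ℝ ∞ f) (k : ℕ) (d : Fin k → Fin N)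
    (j : Fin N) (x : E) (τ : ℝ) :
    HasDerivAt (fun σ : ℝ => Dk k f d (x + σ • 𝐞 j))
      (Dk (k + 1) f (Fin.cons j d) (x + τ • 𝐞 j)) τ := by
  have hline : HasDerivAt (fun σ : ℝ => x + σ • 𝐞 j) (𝐞 j) τ := by
    simpa using ((hasDerivAt_id τ).smul_const (𝐞 j)).const_add x
  have hD : DifferentiableAt ℝ (iteratedFDeriv ℝ k f) (x + τ • 𝐞 j) :=
    (hf.differentiable_iteratedFDeriv (mod_cast WithTop.coe_lt_top _)) _
  refine ((hD.hasFDerivAt.continuousMultilinear_apply_const (fun i => 𝐞 (d i))).comp_hasDerivAt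
    τ hline).congr_deriv ?_
  unfold Dk
  rw [iteratedFDeriv_succ_apply_left]
  rfl

theorem Dk_succ_right {f : E → F} (hf : ContDiff ℝ ∞ f) (k : ℕ) (d : Fin k → Fin N)
    (j : Fin N) (x : E) :
    Dk (k + 1) f (Fin.snoc d j) x = Dk k (fun y => fderiv ℝ f y (𝐞 j)) d x := by
  have hcomp : iteratedFDeriv ℝ k (fun y => fderiv ℝ f y (𝐞 j)) x =
      (ContinuousLinearMap.apply ℝ F (𝐞 j)).compContinuousMultilinearMap
        (iteratedFDeriv ℝ k (fderiv ℝ f) x) :=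
    (ContinuousLinearMap.apply ℝ F (𝐞 j)).iteratedFDeriv_comp_left
      (hf.fderiv_right (m := ∞) (mod_cast le_top)).contDiffAt (mod_cast le_top)
  rw [Dk, Dk, hcomp, iteratedFDeriv_succ_apply_right]
  simp only [ContinuousLinearMap.compContinuousMultilinearMap_coe, Function.comp_apply,
    ContinuousLinearMap.apply_apply, Fin.snoc_last]
  congr 2
  funext i
  simp [Fin.init]

theorem Dk_const_smul_fwdDiff {f : E → F} (hf : ContDiff ℝ ∞ f) (k : ℕ) (d : Fin k → Fin N)
    (c : ℝ) (a x : E) :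
    Dk k (c • Δ_[a] f) d x = c • (Dk k f d (x + a) - Dk k f d x) := by
  have hshift : ContDiff ℝ ∞ (fun y => f (y + a)) := hf.comp (contDiff_id.add contDiff_const)
  have hΔ : Δ_[a] f = (fun y => f (y + a)) - f := rfl
  rw [Dk, hΔ, iteratedFDeriv_const_smul_apply (f := (fun y => f (y + a)) - f)
      ((hshift.sub hf).contDiffAt.of_le (mod_cast le_top)),
    iteratedFDeriv_sub_apply (hshift.contDiffAt.of_le (mod_cast le_top))
      (hf.contDiffAt.of_le (mod_cast le_top)), iteratedFDeriv_comp_add_right]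
  rfl

theorem contDiff_fderiv_apply {f : E → F} (hf : ContDiff ℝ ∞ f) (w : E) :
    ContDiff ℝ ∞ (fun y => fderiv ℝ f y w) :=
  (hf.fderiv_right (m := ∞) (mod_cast le_top)).clm_apply contDiff_const

theorem lap_eq_sum {f : E → F} (hf : ContDiff ℝ ∞ f) :
    lap f = ∑ i : Fin N, fun y => fderiv ℝ (fun z => fderiv ℝ f z (𝐞 i)) y (𝐞 i) := by
  funext y
  rw [Finset.sum_apply]
  refine Finset.sum_congr rfl fun i _ => ?_
  have hsnoc : (fun _ : Fin 2 => i) = Fin.snoc (Fin.snoc (Fin.elim0 : Fin 0 → Fin N) i) i := by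
    funext l
    fin_cases l <;> rfl
  change Dk 2 f (fun _ => i) y = _
  rw [hsnoc, Dk_succ_right hf, Dk_succ_right (contDiff_fderiv_apply hf _), Dk,
    iteratedFDeriv_zero_apply]

theorem Dk_lap {f : E → F} (hf : ContDiff ℝ ∞ f) (k : ℕ) (d : Fin k → Fin N) (x : E) :
    Dk k (lap f) d x = ∑ i : Fin N, Dk (k + 2) f (Fin.snoc (Fin.snoc d i) i) x := by
  have hsmooth : ∀ i : Fin N,
      ContDiff ℝ ∞ (fun y => fderiv ℝ (fun z => fderiv ℝ f z (𝐞 i)) y (𝐞 i)) :=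
    fun i => contDiff_fderiv_apply (contDiff_fderiv_apply hf _) _
  rw [Dk, lap_eq_sum hf, iteratedFDeriv_sum_apply fun i _ =>
    (hsmooth i).contDiffAt.of_le (mod_cast le_top)]
  simp only [sum_apply]
  refine Finset.sum_congr rfl fun i _ => ?_
  rw [Dk_succ_right hf, Dk_succ_right (contDiff_fderiv_apply hf _)]
  rfl

theorem dist_add_smul_single_self (x : E) (τ : ℝ) (j : Fin N) : dist (x + τ • 𝐞 j) x = |τ| := by
  simp [dist_eq_norm, norm_smul, PiLp.norm_single]

theorem norm_sub_sub_smul_le_of_hasDerivAt {g g' : ℝ → F} {a : ℝ} {c : F} {M : ℝ}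
    (hg : ∀ τ ∈ Set.uIcc 0 a, HasDerivAt g (g' τ) τ)
    (hM : ∀ τ ∈ Set.uIcc 0 a, ‖g' τ - c‖ ≤ M) :
    ‖g a - g 0 - a • c‖ ≤ M * |a| := by
  have hmvt := (convex_uIcc (0 : ℝ) a).norm_image_sub_le_of_norm_hasDerivWithin_le
    (f := fun τ => g τ - τ • c)
    (fun τ hτ => ((hg τ hτ).sub ((hasDerivAt_id τ).smul_const c)).hasDerivWithinAt)
    (by simpa using hM) Set.left_mem_uIcc Set.right_mem_uIcc
  calc ‖g a - g 0 - a • c‖ = ‖(g a - a • c) - (g 0 - (0 : ℝ) • c)‖ := by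
        rw [zero_smul, sub_zero, sub_right_comm]
    _ ≤ M * ‖a - 0‖ := hmvt
    _ = M * |a| := by rw [sub_zero, Real.norm_eq_abs]

noncomputable def diffQuot (h : ℝ) : (k : ℕ) → (Fin k → Fin N) → (E → F) → E → F
  | 0, _, f => f
  | k + 1, d, f => diffQuot h k (Fin.tail d) (h⁻¹ • Δ_[h • 𝐞 (d 0)] f)

theorem hasDerivAt_diffQuot (h : ℝ) (k : ℕ) (d : Fin k → Fin N) {w : ℝ → E → F} {w' : E → F}
    {s : ℝ} (hw : ∀ y, HasDerivAt (fun r => w r y) (w' y) s) (x : E) :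
    HasDerivAt (fun r => diffQuot h k d (w r) x) (diffQuot h k d w' x) s := by
  induction k generalizing w w' x with
  | zero => exact hw x
  | succ k ih =>
    exact ih (Fin.tail d) (fun y => ((hw _).sub (hw y)).const_smul h⁻¹) x

theorem norm_diffQuot_sub_le {h : ℝ} (hh : h ≠ 0) {k : ℕ} (d : Fin k → Fin N) {f : E → F}
    (hf : ContDiff ℝ ∞ f) (x : E) (c : F) {M : ℝ}
    (hM : ∀ ξ, dist ξ x ≤ k * |h| → ‖Dk k f d ξ - c‖ ≤ M) :
    ‖diffQuot h k d f x - c‖ ≤ M := by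
  induction k generalizing f with
  | zero =>
    simpa [diffQuot, Dk] using hM x (by simp)
  | succ k ih =>
    have hΔ : ContDiff ℝ ∞ (h⁻¹ • Δ_[h • 𝐞 (d 0)] f) :=
      ((hf.comp (contDiff_id.add contDiff_const)).sub hf).const_smul h⁻¹
    refine ih (Fin.tail d) hΔ fun ξ hξ => ?_
    rw [Dk_const_smul_fwdDiff hf]
    have hline := norm_sub_sub_smul_le_of_hasDerivAt (a := h) (c := c) (M := M)
      (fun τ _ => hasDerivAt_Dk_line hf k (Fin.tail d) (d 0) ξ τ) fun τ hτ => by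
        rw [Fin.cons_self_tail]
        refine hM _ ?_
        have hτh : |τ| ≤ |h| := by simpa using Set.abs_sub_left_of_mem_uIcc hτ
        calc dist (ξ + τ • 𝐞 (d 0)) x ≤ dist (ξ + τ • 𝐞 (d 0)) ξ + dist ξ x := dist_triangle _ _ _
          _ ≤ |h| + k * |h| := by
            rw [dist_add_smul_single_self]
            gcongr
          _ = (k + 1 : ℕ) * |h| := by push_cast; ring
    rw [zero_smul, add_zero] at hline
    calc ‖h⁻¹ • (Dk k f (Fin.tail d) (ξ + h • 𝐞 (d 0)) - Dk k f (Fin.tail d) ξ) - c‖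
        = ‖h⁻¹ • (Dk k f (Fin.tail d) (ξ + h • 𝐞 (d 0)) - Dk k f (Fin.tail d) ξ - h • c)‖ := by
          rw [smul_sub _ _ (h • c), smul_smul, inv_mul_cancel₀ hh, one_smul]
      _ = |h|⁻¹ * ‖Dk k f (Fin.tail d) (ξ + h • 𝐞 (d 0)) - Dk k f (Fin.tail d) ξ - h • c‖ := by
          rw [norm_smul, Real.norm_eq_abs, abs_inv]
      _ ≤ |h|⁻¹ * (M * |h|) := by gcongr
      _ = M := by field_simp

theorem tendsto_diffQuot {f : E → F} (hf : ContDiff ℝ ∞ f) (k : ℕ) (d : Fin k → Fin N) (x : E) :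
    Tendsto (fun h => diffQuot h k d f x) (𝓝[≠] 0) (𝓝 (Dk k f d x)) := by
  rw [Metric.tendsto_nhdsWithin_nhds]
  intro ε hε
  obtain ⟨δ, hδ, hball⟩ := Metric.continuous_iff.1 (contDiff_Dk hf k d).continuous x (ε / 2)
    (half_pos hε)
  refine ⟨δ / (k + 1), by positivity, fun h hh hhδ => ?_⟩
  rw [Real.dist_0_eq_abs, lt_div_iff₀ (by positivity)] at hhδ
  rw [dist_eq_norm]
  refine (norm_diffQuot_sub_le hh d hf x _ fun ξ hξ => ?_).trans_lt (half_lt_self hε)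
  rw [← dist_eq_norm]
  exact (hball ξ (by nlinarith [abs_nonneg h])).le

theorem norm_Dk_sub_le_of_hasDerivAt {w w' : ℝ → E → F} {a b : ℝ} (hab : a ≤ b)
    (hw : ∀ s, ContDiff ℝ ∞ (w s)) (hw' : ∀ s, ContDiff ℝ ∞ (w' s))
    (hderiv : ∀ s ∈ Icc a b, ∀ y, HasDerivAt (fun r => w r y) (w' s y) s)
    {k : ℕ} (d : Fin k → Fin N) (x : E) {ρ B : ℝ} (hρ : 0 < ρ)
    (hB : ∀ s ∈ Icc a b, ∀ ξ, dist ξ x ≤ ρ → ‖Dk k (w' s) d ξ‖ ≤ B) :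
    ‖Dk k (w b) d x - Dk k (w a) d x‖ ≤ B * (b - a) := by
  have hsmall : ∀ᶠ h in 𝓝[≠] (0 : ℝ), h ≠ 0 ∧ k * |h| ≤ ρ := by
    have hcont : Tendsto (fun h : ℝ => k * |h|) (𝓝 0) (𝓝 0) := by
      simpa using ((continuous_abs.const_mul (k : ℝ)).tendsto (0 : ℝ))
    exact eventually_mem_nhdsWithin.and
      (eventually_nhdsWithin_of_eventually_nhds (hcont.eventually (eventually_le_nhds hρ)))
  refine le_of_tendsto ((tendsto_diffQuot (hw b) k d x).sub (tendsto_diffQuot (hw a) k d x)).norm ?_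
  filter_upwards [hsmall] with h ⟨hh, hhρ⟩
  refine norm_image_sub_le_of_norm_deriv_le_segment' (f := fun s => diffQuot h k d (w s) x)
    (fun s hs => (hasDerivAt_diffQuot h k d (hderiv s hs) x).hasDerivWithinAt)
    (fun s hs => ?_) b ⟨hab, le_rfl⟩
  simpa using norm_diffQuot_sub_le hh d (hw' s) x 0 fun ξ hξ => by
    simpa using hB s (Ico_subset_Icc_self hs) ξ (hξ.trans hhρ)

theorem norm_Dk_succ_le {f : E → F} (hf : ContDiff ℝ ∞ f) {k : ℕ} (j : Fin N)
    (d : Fin k → Fin N) (x : E) {M₀ M₂ : ℝ}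
    (h₀ : ∀ ξ, dist ξ x ≤ 1 → ‖Dk k f d ξ‖ ≤ M₀)
    (h₂ : ∀ ξ, dist ξ x ≤ 1 → ‖Dk (k + 2) f (Fin.cons j (Fin.cons j d)) ξ‖ ≤ M₂) :
    ‖Dk (k + 1) f (Fin.cons j d) x‖ ≤ 2 * M₀ + M₂ := by
  set G := Dk (k + 1) f (Fin.cons j d)
  have hnear : ∀ τ ∈ uIcc (0 : ℝ) 1, dist (x + τ • 𝐞 j) x ≤ 1 := fun τ hτ => by
    rw [dist_add_smul_single_self]
    simpa using abs_sub_left_of_mem_uIcc hτ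
  have hG : ∀ τ ∈ uIcc (0 : ℝ) 1, ‖G (x + τ • 𝐞 j) - G x‖ ≤ M₂ := fun τ hτ => by
    have hM₂ : 0 ≤ M₂ := (norm_nonneg _).trans (h₂ x (by simp))
    have hτ1 : |τ| ≤ 1 := by simpa using abs_sub_left_of_mem_uIcc hτ
    have hlip := norm_sub_sub_smul_le_of_hasDerivAt (g := fun σ => G (x + σ • 𝐞 j)) (c := 0)
      (a := τ) (M := M₂) (fun σ _ => hasDerivAt_Dk_line hf (k + 1) _ j x σ) fun σ hσ => by
        simpa using h₂ _ (hnear σ (uIcc_subset_uIcc left_mem_uIcc hτ hσ))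
    simp only [zero_smul, add_zero, smul_zero] at hlip
    simpa using hlip.trans (mul_le_of_le_one_right hM₂ hτ1)
  have htaylor := norm_sub_sub_smul_le_of_hasDerivAt (g := fun σ => Dk k f d (x + σ • 𝐞 j))
    (c := G x) (a := 1) (M := M₂) (fun σ _ => hasDerivAt_Dk_line hf k d j x σ) hG
  simp only [one_smul, zero_smul, add_zero, abs_one, mul_one] at htaylor
  calc ‖G x‖ = ‖Dk k f d (x + 𝐞 j) - Dk k f d x - (Dk k f d (x + 𝐞 j) - Dk k f d x - G x)‖ := by
        rw [sub_sub_cancel]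
    _ ≤ ‖Dk k f d (x + 𝐞 j)‖ + ‖Dk k f d x‖ + M₂ :=
        (norm_sub_le _ _).trans (add_le_add (norm_sub_le _ _) htaylor)
    _ ≤ M₀ + M₀ + M₂ := by
        gcongr
        · exact h₀ _ (by simp)
        · exact h₀ x (by simp)
    _ = 2 * M₀ + M₂ := by ring

noncomputable def weightedSup (m k : ℕ) (f : E → F) : ℝ≥0∞ :=
  ⨆ d : Fin k → Fin N, ⨆ x, ENNReal.ofReal (jb x ^ m) * ‖Dk k f d x‖₊

noncomputable def weightedSupOn (m k : ℕ) (u : ℝ → E → F) (I : Set ℝ) : ℝ≥0∞ :=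
  ⨆ d : Fin k → Fin N, ⨆ s ∈ I, ⨆ x, ENNReal.ofReal (jb x ^ m) * ‖Dk k (u s) d x‖₊

theorem le_weightedSup (m : ℕ) {k : ℕ} (f : E → F) (d : Fin k → Fin N) (x : E) :
    ENNReal.ofReal (jb x ^ m) * ‖Dk k f d x‖₊ ≤ weightedSup m k f :=
  le_iSup₂_of_le (f := fun d x => ENNReal.ofReal (jb x ^ m) * ‖Dk k f d x‖₊) d x le_rfl

theorem le_weightedSupOn (m : ℕ) {k : ℕ} (u : ℝ → E → F) {I : Set ℝ} (d : Fin k → Fin N)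
    {s : ℝ} (hs : s ∈ I) (x : E) :
    ENNReal.ofReal (jb x ^ m) * ‖Dk k (u s) d x‖₊ ≤ weightedSupOn m k u I :=
  le_iSup_of_le d (le_iSup₂_of_le s hs (le_iSup_of_le x le_rfl))

theorem weightedSupOn_succ_le {u : ℝ → E → F} {I : Set ℝ} (hu : ∀ s ∈ I, ContDiff ℝ ∞ (u s))
    (m k : ℕ) :
    weightedSupOn m (k + 1) u I ≤
      ENNReal.ofReal (2 ^ (m + 1)) * (weightedSupOn m k u I + weightedSupOn m (k + 2) u I) := by
  set A₀ := weightedSupOn m k u I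
  set A₂ := weightedSupOn m (k + 2) u I
  refine iSup_le fun d => iSup₂_le fun s hs => iSup_le fun x => ?_
  rcases eq_or_ne A₀ ⊤ with h₀ | h₀
  · simp [h₀]
  rcases eq_or_ne A₂ ⊤ with h₂ | h₂
  · simp [h₂]
  have hlandau := norm_Dk_succ_le (hu s hs) (d 0) (Fin.tail d) x
    (fun ξ hξ => norm_le_of_ofReal_jb_pow_mul_le h₀ hξ (le_weightedSupOn m u _ hs ξ))
    (fun ξ hξ => norm_le_of_ofReal_jb_pow_mul_le h₂ hξ (le_weightedSupOn m u _ hs ξ))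
  rw [Fin.cons_self_tail] at hlandau
  have hw : 0 < jb x ^ m := pow_pos (zero_lt_one.trans_le (one_le_jb x)) m
  rw [ofReal_jb_pow_mul_nnnorm, ← ENNReal.ofReal_toReal h₀, ← ENNReal.ofReal_toReal h₂,
    ← ENNReal.ofReal_add ENNReal.toReal_nonneg ENNReal.toReal_nonneg,
    ← ENNReal.ofReal_mul (by positivity)]
  refine ENNReal.ofReal_le_ofReal ?_
  calc jb x ^ m * ‖Dk (k + 1) (u s) d x‖
      ≤ jb x ^ m * (2 * (2 ^ m * A₀.toReal / jb x ^ m) + 2 ^ m * A₂.toReal / jb x ^ m) := by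
        gcongr
    _ = 2 ^ m * (2 * A₀.toReal + A₂.toReal) := by field_simp
    _ ≤ 2 ^ (m + 1) * (A₀.toReal + A₂.toReal) := by
        rw [pow_succ]
        nlinarith [ENNReal.toReal_nonneg (a := A₀), ENNReal.toReal_nonneg (a := A₂),
          pow_pos (zero_lt_two (α := ℝ)) m]

theorem contDiff_lap {f : E → F} (hf : ContDiff ℝ ∞ f) : ContDiff ℝ ∞ (lap f) := by
  unfold lap
  exact ContDiff.sum fun i _ => contDiff_Dk hf 2 fun _ => i

theorem norm_Dk_I_mul_lap_le {f : E → ℂ} (hf : ContDiff ℝ ∞ f) (k : ℕ) (d : Fin k → Fin N)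
    (x : E) :
    ‖Dk k (fun y => Complex.I * lap f y) d x‖ ≤
      ∑ i : Fin N, ‖Dk (k + 2) f (Fin.snoc (Fin.snoc d i) i) x‖ := by
  change ‖Dk k (fun y => Complex.I • lap f y) d x‖ ≤ _
  rw [Dk, iteratedFDeriv_const_smul_apply' ((contDiff_lap hf).contDiffAt.of_le (mod_cast le_top)),
    smul_apply, norm_smul, Complex.norm_I, one_mul, ← Dk, Dk_lap hf]
  exact norm_sum_le _ _

theorem weightedSupOn_le_add {u : ℝ → E → ℂ} (hu : ∀ s, ContDiff ℝ ∞ (u s))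
    (hderiv : ∀ s y, HasDerivAt (fun r => u r y) (Complex.I * lap (u s) y) s)
    (m k : ℕ) {t : ℝ} (ht : 0 ≤ t) :
    weightedSupOn m k u (Icc 0 t) ≤
      weightedSup m k (u 0) +
        ENNReal.ofReal (N * 2 ^ m * t) * weightedSupOn m (k + 2) u (Icc 0 t) := by
  set A := weightedSupOn m (k + 2) u (Icc 0 t)
  refine iSup_le fun d => iSup₂_le fun s hs => iSup_le fun x => ?_
  rcases eq_or_ne A ⊤ with hA | hA
  · rcases ht.eq_or_lt with rfl | ht₀
    · obtain rfl : s = 0 := le_antisymm hs.2 hs.1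
      exact (le_weightedSup m _ d x).trans le_self_add
    · -- for `N = 0` the supremum `A` runs over the empty type `Fin (k + 2) → Fin 0`
      have hN : (0 : ℝ) < N := by
        rcases Nat.eq_zero_or_pos N with rfl | hN
        · simp [A, weightedSupOn] at hA
        · exact_mod_cast hN
      rw [hA, ENNReal.mul_top (ENNReal.ofReal_pos.2 (by positivity)).ne', add_top]
      exact le_top
  set B := N * (2 ^ m * A.toReal / jb x ^ m)
  have hB : ∀ r ∈ Icc 0 s, ∀ ξ, dist ξ x ≤ 1 →
      ‖Dk k (fun y => Complex.I * lap (u r) y) d ξ‖ ≤ B := fun r hr ξ hξ =>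
    calc ‖Dk k (fun y => Complex.I * lap (u r) y) d ξ‖
        ≤ ∑ i : Fin N, ‖Dk (k + 2) (u r) (Fin.snoc (Fin.snoc d i) i) ξ‖ :=
          norm_Dk_I_mul_lap_le (hu r) k d ξ
      _ ≤ ∑ _i : Fin N, 2 ^ m * A.toReal / jb x ^ m :=
          Finset.sum_le_sum fun i _ => norm_le_of_ofReal_jb_pow_mul_le hA hξ
            (le_weightedSupOn m u _ (show r ∈ Icc 0 t from ⟨hr.1, hr.2.trans hs.2⟩) ξ)
      _ = B := by simp [B]
  have hdiff := norm_Dk_sub_le_of_hasDerivAt hs.1 hu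
    (fun r => contDiff_const.mul (contDiff_lap (hu r))) (fun r _ y => hderiv r y) d x one_pos hB
  have hw : 0 < jb x ^ m := pow_pos (zero_lt_one.trans_le (one_le_jb x)) m
  have hreal : jb x ^ m * ‖Dk k (u s) d x‖ ≤
      jb x ^ m * ‖Dk k (u 0) d x‖ + N * 2 ^ m * t * A.toReal :=
    calc jb x ^ m * ‖Dk k (u s) d x‖ ≤ jb x ^ m * (‖Dk k (u 0) d x‖ + B * (s - 0)) := by
          gcongr
          linarith [norm_le_insert' (Dk k (u s) d x) (Dk k (u 0) d x)]
      _ = jb x ^ m * ‖Dk k (u 0) d x‖ + N * 2 ^ m * s * A.toReal := by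
          simp only [B, sub_zero]; field_simp
      _ ≤ jb x ^ m * ‖Dk k (u 0) d x‖ + N * 2 ^ m * t * A.toReal := by
          gcongr
          exact hs.2
  calc ENNReal.ofReal (jb x ^ m) * ‖Dk k (u s) d x‖₊
      = ENNReal.ofReal (jb x ^ m * ‖Dk k (u s) d x‖) := ofReal_jb_pow_mul_nnnorm m x _
    _ ≤ ENNReal.ofReal (jb x ^ m * ‖Dk k (u 0) d x‖ + N * 2 ^ m * t * A.toReal) :=
        ENNReal.ofReal_le_ofReal hreal
    _ = ENNReal.ofReal (jb x ^ m) * ‖Dk k (u 0) d x‖₊ + ENNReal.ofReal (N * 2 ^ m * t) * A := by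
        rw [ENNReal.ofReal_add (by positivity) (by positivity), ofReal_jb_pow_mul_nnnorm,
          ENNReal.ofReal_mul (p := N * 2 ^ m * t) (by positivity), ENNReal.ofReal_toReal hA]
    _ ≤ weightedSup m k (u 0) + ENNReal.ofReal (N * 2 ^ m * t) * A := by
        gcongr
        exact le_weightedSup m _ d x

end Schrodinger

theorem sum_range_le_of_le_add_mul {A : ℕ → ℝ≥0∞} {S a c : ℝ≥0∞} {n : ℕ}
    (hstep : ∀ k ≤ 2 * n, A k ≤ S + a * A (k + 2))
    (hodd : A (2 * n + 1) ≤ c * (A (2 * n) + A (2 * n + 2))) :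
    ∑ k ∈ Finset.range (2 * n + 1), A k ≤
      (2 * n + 1) * ((1 + a) ^ n * (1 + c) * (S + a * A (2 * n + 2))) := by
  set R := A (2 * n + 2)
  set X : ℕ → ℝ≥0∞ := fun i => (1 + a) ^ i * (1 + c) * (S + a * R)
  have hX_mono : Monotone X := fun i j hij => by
    simp only [X]
    gcongr
    exact le_self_add
  have hX : ∀ i, S + a * R ≤ X i := fun i => by
    calc S + a * R = 1 * 1 * (S + a * R) := by ring
      _ ≤ X i := by
        simp only [X]
        gcongr
        · exact one_le_pow₀ le_self_add
        · exact le_self_add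
  have hclaim : ∀ i k, k ≤ 2 * n → 2 * n ≤ k + 2 * i → A k ≤ X i := by
    intro i
    induction i with
    | zero =>
      intro k hk₁ hk₂
      obtain rfl : k = 2 * n := by omega
      exact (hstep _ le_rfl).trans (hX 0)
    | succ i ih =>
      intro k hk₁ hk₂
      rcases (show k = 2 * n ∨ k + 1 = 2 * n ∨ k + 2 ≤ 2 * n by omega) with rfl | hk | hk
      · exact (hstep _ le_rfl).trans (hX _)
      · calc A k ≤ S + a * A (2 * n + 1) := by
              simpa [show k + 2 = 2 * n + 1 by omega] using hstep k hk₁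
          _ ≤ S + a * (c * ((S + a * R) + R)) := by
              gcongr
              exact hodd.trans (by gcongr; exact hstep _ le_rfl)
          _ ≤ S + a * (c * ((S + a * R) + R)) + (a * S + c * S + a * R + a * a * R) :=
              le_self_add
          _ = X 1 := by ring
          _ ≤ X (i + 1) := hX_mono (by omega)
      · calc A k ≤ S + a * A (k + 2) := hstep k hk₁
          _ ≤ (S + a * R) + a * X i := by
              gcongr
              · exact le_self_add
              · exact ih _ hk (by omega)
          _ ≤ X i + a * X i := by gcongr; exact hX i
          _ = X (i + 1) := by ring
  calc ∑ k ∈ Finset.range (2 * n + 1), A k ≤ ∑ _k ∈ Finset.range (2 * n + 1), X n :=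
        Finset.sum_le_sum fun k hk => hclaim n k (by simp at hk; omega) (by omega)
    _ = (2 * n + 1) * X n := by simp

theorem sum_iSup_iSup_add_le {α : ℕ → Type*} {β : Type*} [Nonempty (α 0)] [Nonempty β]
    (g : (k : ℕ) → α k → β → ℝ≥0∞) (b : ℝ≥0∞) (n : ℕ) :
    (∑ k ∈ Finset.range (n + 1), ⨆ i, ⨆ x, g k i x) + b ≤
      ∑ k ∈ Finset.range (n + 1), ⨆ i, ⨆ x, (g k i x + b) := by
  rw [Finset.sum_range_succ', Finset.sum_range_succ', add_assoc]
  gcongr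
  · exact le_self_add
  · simp only [ENNReal.iSup_add, le_rfl]

theorem two_step_bound_le_ofReal {S R : ℝ≥0∞} {a c t : ℝ} (ha : 0 ≤ a) (hc : 0 ≤ c) (ht : 0 ≤ t)
    (n : ℕ) :
    (2 * n + 1) * ((1 + ENNReal.ofReal (a * t)) ^ n * (1 + ENNReal.ofReal c) *
        (S + ENNReal.ofReal (a * t) * R)) ≤
      ENNReal.ofReal ((2 * n + 1) * (1 + a) ^ (n + 1) * (1 + c) * (1 + t) ^ n) *
        (S + ENNReal.ofReal ((2 * n + 1) * (1 + a) ^ (n + 1) * (1 + c) * t * (1 + t) ^ n) * R) := by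
  have hK : (2 * n + 1 : ℝ≥0∞) * ((1 + ENNReal.ofReal (a * t)) ^ n * (1 + ENNReal.ofReal c)) =
      ENNReal.ofReal ((2 * n + 1) * (1 + a * t) ^ n * (1 + c)) := by
    conv_rhs => rw [ENNReal.ofReal_mul (by positivity), ENNReal.ofReal_mul (by positivity),
      ENNReal.ofReal_pow (by positivity), ENNReal.ofReal_add zero_le_one (by positivity),
      ENNReal.ofReal_add zero_le_one hc]
    rw [show (2 * n + 1 : ℝ) = ((2 * n + 1 : ℕ) : ℝ) by push_cast; ring, ENNReal.ofReal_natCast]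
    push_cast
    rw [ENNReal.ofReal_one, mul_assoc]
  have hC : 1 + a ≤ (2 * n + 1) * (1 + a) ^ (n + 1) * (1 + c) * (1 + t) ^ n := by
    have h1a : 1 ≤ 1 + a := by linarith
    calc 1 + a ≤ 1 * (1 + a) ^ (n + 1) * 1 * 1 := by simpa using le_self_pow₀ h1a (by omega)
      _ ≤ (2 * n + 1) * (1 + a) ^ (n + 1) * (1 + c) * (1 + t) ^ n := by
        gcongr
        · linarith [n.cast_nonneg (α := ℝ)]
        · linarith
        · exact one_le_pow₀ (by linarith)
  rw [← mul_assoc, hK]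
  gcongr ENNReal.ofReal ?_ * (S + ENNReal.ofReal ?_ * R)
  · calc (2 * n + 1) * (1 + a * t) ^ n * (1 + c)
        ≤ (2 * n + 1) * ((1 + a) ^ n * (1 + t) ^ n) * (1 + c) := by
          rw [← mul_pow]; gcongr; nlinarith
      _ ≤ (2 * n + 1) * ((1 + a) ^ (n + 1) * (1 + t) ^ n) * (1 + c) := by
          gcongr
          · linarith
          · exact n.le_succ
      _ = _ := by ring
  · calc a * t ≤ (1 + a) * t := by gcongr; linarith
      _ ≤ ((2 * n + 1) * (1 + a) ^ (n + 1) * (1 + c) * (1 + t) ^ n) * t := by gcongr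
      _ = _ := by ring

open Schrodinger

theorem stmt10_general (N : ℕ) (n m : ℕ) :
    ∃ C : ℝ, 0 < C ∧
      ∀ (v : ℝ → 𝓢(EuclideanSpace ℝ (Fin N), ℂ)),
        (∀ (t : ℝ) (x : EuclideanSpace ℝ (Fin N)),
          HasDerivAt (fun s => v s x) (Complex.I * lap (fun y => v t y) x) t) →
        ∀ t : ℝ, 0 ≤ t →
          ∑ k ∈ Finset.range (2 * n + 1), ⨆ d : Fin k → Fin N,
              ⨆ s ∈ Set.Icc (0 : ℝ) t, ⨆ x,
                ENNReal.ofReal (jb x ^ m) * ‖Dk k (fun y => v s y) d x‖₊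
          ≤ ENNReal.ofReal (C * (1 + t) ^ n) *
              ∑ k ∈ Finset.range (2 * n + 1), ⨆ d : Fin k → Fin N, ⨆ x,
                ENNReal.ofReal (jb x ^ m) * ‖Dk k (fun y => v 0 y) d x‖₊
            + ENNReal.ofReal (C * t * (1 + t) ^ n) *
                ⨆ d : Fin (2 * n + 2) → Fin N, ⨆ s ∈ Set.Icc (0 : ℝ) t, ⨆ x,
                  ENNReal.ofReal (jb x ^ m) * ‖Dk (2 * n + 2) (fun y => v s y) d x‖₊ := by
  refine ⟨(2 * n + 1) * (1 + N * 2 ^ m) ^ (n + 1) * (1 + 2 ^ (m + 1)), by positivity,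
    fun v hv t ht => ?_⟩
  set u : ℝ → EuclideanSpace ℝ (Fin N) → ℂ := fun s y => v s y
  have hu : ∀ s, ContDiff ℝ ∞ (u s) := fun s => (v s).smooth ⊤
  set S := ∑ k ∈ Finset.range (2 * n + 1), weightedSup m k (u 0)
  have hstep : ∀ k ≤ 2 * n, weightedSupOn m k u (Icc 0 t) ≤
      S + ENNReal.ofReal (N * 2 ^ m * t) * weightedSupOn m (k + 2) u (Icc 0 t) := fun k hk =>
    (weightedSupOn_le_add hu hv m k ht).trans <| by
      gcongr
      exact Finset.single_le_sum (f := fun j => weightedSup m j (u 0)) (fun _ _ => zero_le)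
        (Finset.mem_range.2 (by omega))
  calc ∑ k ∈ Finset.range (2 * n + 1), weightedSupOn m k u (Icc 0 t)
      ≤ _ := sum_range_le_of_le_add_mul hstep (weightedSupOn_succ_le (fun s _ => hu s) m (2 * n))
    _ ≤ _ := two_step_bound_le_ofReal (by positivity) (by positivity) ht n
    _ ≤ _ := by
      -- the binders `∑ k ∈ _,` and `⨆ x,` of the data term extend over the last summand
      gcongr
      exact sum_iSup_iSup_add_le _ _ _

/-- Weighted L^∞ estimate for derivatives up to order 2n of the free Schrödinger
    evolution v(t) = e^{itΔ}ψ (encoded as a Schwartz-valued solution with ψ = v 0),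
    in terms of the data and derivatives of order 2n+2 of the evolution. -/
theorem stmt10 (N : ℕ) (hN : 0 < N) (n m J : ℕ)
    (hn : (N : ℝ) / 2 < n) (hm : (N : ℝ) / 2 + 1 < m) (hJ : 2 * n ≤ J) :
    ∃ C : ℝ, 0 < C ∧
      ∀ (v : ℝ → 𝓢(EuclideanSpace ℝ (Fin N), ℂ)),
        (∀ (t : ℝ) (x : EuclideanSpace ℝ (Fin N)),
          HasDerivAt (fun s => v s x) (Complex.I * lap (fun y => v t y) x) t) →
        ∀ t : ℝ, 0 ≤ t →
          ∑ k ∈ Finset.range (2 * n + 1), ⨆ d : Fin k → Fin N,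
              ⨆ s ∈ Set.Icc (0 : ℝ) t, ⨆ x,
                ENNReal.ofReal (jb x ^ m) * ‖Dk k (fun y => v s y) d x‖₊
          ≤ ENNReal.ofReal (C * (1 + t) ^ n) *
              ∑ k ∈ Finset.range (2 * n + 1), ⨆ d : Fin k → Fin N, ⨆ x,
                ENNReal.ofReal (jb x ^ m) * ‖Dk k (fun y => v 0 y) d x‖₊
            + ENNReal.ofReal (C * t * (1 + t) ^ n) *
                ⨆ d : Fin (2 * n + 2) → Fin N, ⨆ s ∈ Set.Icc (0 : ℝ) t, ⨆ x,
                  ENNReal.ofReal (jb x ^ m) * ‖Dk (2 * n + 2) (fun y => v s y) d x‖₊ :=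
  stmt10_general N n m
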